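/- arXiv:1402.2097 — 2 statements merged into one kernel-verified Lean document; each statement's English description precedes it below -/
import Mathlib

section
/- The LCSk recursive rule is correct: for 1 ≤ i,j ≤ n-k+1, LCSk_{i,j} = max( LCSk_{i,j-1}, LCSk_{i-1,j}, LCSk_{i-k,j-k} + kMatch(i,j) ), where LCSk_{x,y} is defined to be 0 whenever x ≤ 0 or y ≤ 0. -/
/-- `c` is a valid chain of non-overlapping `k`-matchings between `A` and `B`
(0-based starting indices). -/
def IsKChain {α : Type*} (A B : List α) (k : ℕ) (c : List (ℕ × ℕ)) : Prop :=
  c.Chain' (fun p q => p.1 + k ≤ q.1 ∧ p.2 + k ≤ q.2) ∧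
  ∀ p ∈ c, p.1 + k ≤ A.length ∧ p.2 + k ≤ B.length ∧
    ∀ f < k, A[p.1 + f]? = B[p.2 + f]?

/-- `LCSk A B k`: maximal number of order-preserving non-overlapping common
`k`-length substrings. -/
noncomputable def LCSk {α : Type*} (A B : List α) (k : ℕ) : ℕ :=
  sSup {l | ∃ c, IsKChain A B k c ∧ c.length = l}

/-- Classical longest common subsequence length. -/
noncomputable def LCS {α : Type*} (A B : List α) : ℕ :=
  sSup {l | ∃ C : List α, C.Sublist A ∧ C.Sublist B ∧ C.length = l}

open Classical in
/-- `kMatch A B k i j` (1-based `i`,`j`): `1` if `a_{i+f} = b_{j+f}` for all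
`0 ≤ f ≤ k-1` (within bounds), `0` otherwise. -/
noncomputable def kMatch {α : Type*} (A B : List α) (k i j : ℕ) : ℕ :=
  if 1 ≤ i ∧ 1 ≤ j ∧ i + k - 1 ≤ A.length ∧ j + k - 1 ≤ B.length ∧
      ∀ f < k, A[i - 1 + f]? = B[j - 1 + f]? then 1 else 0

/-- The LCSk dynamic-programming table (1-based `i`,`j`):
`LCSk` of the prefixes `A[1..i+k-1]` and `B[1..j+k-1]` (so that matched
substrings of `A` start at indices `≤ i` and of `B` at indices `≤ j`);
the value is `0` whenever `i = 0` or `j = 0`. -/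
noncomputable def LCSkT {α : Type*} (A B : List α) (k i j : ℕ) : ℕ :=
  if i = 0 ∨ j = 0 then 0
  else LCSk (A.take (i + k - 1)) (B.take (j + k - 1)) k

/-!
Take an optimal chain for the table entry `(i, j)`. If its last pair starts before row `i` or
before column `j`, the whole chain is counted by `LCSkT (i - 1) j` or `LCSkT i (j - 1)`.
Otherwise the last pair is the match at `(i, j)` itself, so `kMatch i j = 1`, and since the
matches do not overlap, the rest of the chain is counted by `LCSkT (i - k) (j - k)`.
Conversely, the table is monotone, and a match at `(i, j)` extends any optimal chain for
`(i - k, j - k)`.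
-/

section

variable {α : Type*} {A B : List α} {k : ℕ}

theorem isKChain_iff_pairwise {c : List (ℕ × ℕ)} :
    IsKChain A B k c ↔
      c.Pairwise (fun p q => p.1 + k ≤ q.1 ∧ p.2 + k ≤ q.2) ∧
      ∀ p ∈ c, p.1 + k ≤ A.length ∧ p.2 + k ≤ B.length ∧
        ∀ f < k, A[p.1 + f]? = B[p.2 + f]? := by
  have : IsTrans (ℕ × ℕ) (fun p q => p.1 + k ≤ q.1 ∧ p.2 + k ≤ q.2) :=
    ⟨fun _ _ _ h₁ h₂ => ⟨by omega, by omega⟩⟩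
  exact and_congr_left' List.isChain_iff_pairwise

theorem isKChain_append_singleton_iff {l : List (ℕ × ℕ)} {p : ℕ × ℕ} :
    IsKChain A B k (l ++ [p]) ↔
      IsKChain A B k l ∧ (∀ q ∈ l, q.1 + k ≤ p.1 ∧ q.2 + k ≤ p.2) ∧
      p.1 + k ≤ A.length ∧ p.2 + k ≤ B.length ∧ ∀ f < k, A[p.1 + f]? = B[p.2 + f]? := by
  simp only [isKChain_iff_pairwise, List.pairwise_append, List.pairwise_singleton,
    List.mem_append, List.mem_singleton, or_imp, forall_and, forall_eq, true_and]
  tauto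

theorem IsKChain.length_le (hk : 1 ≤ k) {c : List (ℕ × ℕ)} (h : IsKChain A B k c) :
    c.length ≤ A.length := by
  obtain ⟨hsep, hvalid⟩ := isKChain_iff_pairwise.mp h
  have hnodup : (c.map Prod.fst).Nodup :=
    (List.pairwise_map.mpr (hsep.imp fun hpq => by omega)).nodup (r := (· < ·))
  have hsub : c.map Prod.fst ⊆ List.range A.length := by
    intro x hx
    obtain ⟨p, hp, rfl⟩ := List.mem_map.mp hx
    exact List.mem_range.mpr (by have := (hvalid p hp).1; omega)
  simpa using (List.subperm_of_subset hnodup hsub).length_le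

variable (A B) in
theorem bddAbove_lengths_isKChain (hk : 1 ≤ k) :
    BddAbove {l | ∃ c, IsKChain A B k c ∧ c.length = l} :=
  ⟨A.length, by rintro _ ⟨c, hc, rfl⟩; exact hc.length_le hk⟩

theorem IsKChain.length_le_LCSk (hk : 1 ≤ k) {c : List (ℕ × ℕ)} (h : IsKChain A B k c) :
    c.length ≤ LCSk A B k :=
  le_csSup (bddAbove_lengths_isKChain A B hk) ⟨c, h, rfl⟩

variable (A B) in
theorem exists_isKChain_length_eq_LCSk (hk : 1 ≤ k) :
    ∃ c, IsKChain A B k c ∧ c.length = LCSk A B k :=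
  Nat.sSup_mem (s := {l | ∃ c, IsKChain A B k c ∧ c.length = l})
    ⟨0, [], ⟨List.isChain_nil, by simp⟩, rfl⟩ (bddAbove_lengths_isKChain A B hk)

theorem isKChain_take_iff {mA mB : ℕ} {c : List (ℕ × ℕ)} :
    IsKChain (A.take mA) (B.take mB) k c ↔
      IsKChain A B k c ∧ ∀ p ∈ c, p.1 + k ≤ mA ∧ p.2 + k ≤ mB := by
  have hvalid (p : ℕ × ℕ) :
      (p.1 + k ≤ (A.take mA).length ∧ p.2 + k ≤ (B.take mB).length ∧
        ∀ f < k, (A.take mA)[p.1 + f]? = (B.take mB)[p.2 + f]?) ↔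
      (p.1 + k ≤ A.length ∧ p.2 + k ≤ B.length ∧ ∀ f < k, A[p.1 + f]? = B[p.2 + f]?) ∧
        p.1 + k ≤ mA ∧ p.2 + k ≤ mB := by
    simp only [List.length_take, le_min_iff]
    constructor
    · rintro ⟨⟨hmA, hA⟩, ⟨hmB, hB⟩, heq⟩
      refine ⟨⟨hA, hB, fun f hf => ?_⟩, hmA, hmB⟩
      rw [← List.getElem?_take_of_lt (show p.1 + f < mA by omega),
        ← List.getElem?_take_of_lt (show p.2 + f < mB by omega)]
      exact heq f hf
    · rintro ⟨⟨hA, hB, heq⟩, hmA, hmB⟩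
      refine ⟨⟨hmA, hA⟩, ⟨hmB, hB⟩, fun f hf => ?_⟩
      rw [List.getElem?_take_of_lt (show p.1 + f < mA by omega),
        List.getElem?_take_of_lt (show p.2 + f < mB by omega)]
      exact heq f hf
  simp only [IsKChain, hvalid, imp_and, forall_and, and_assoc]

theorem isKChain_take_iff_lt {x y : ℕ} (hx : 1 ≤ x) (hy : 1 ≤ y) {c : List (ℕ × ℕ)} :
    IsKChain (A.take (x + k - 1)) (B.take (y + k - 1)) k c ↔
      IsKChain A B k c ∧ ∀ p ∈ c, p.1 < x ∧ p.2 < y := by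
  rw [isKChain_take_iff]
  refine and_congr_right fun _ => forall₂_congr fun p _ => ?_
  omega

theorem IsKChain.length_le_LCSkT (hk : 1 ≤ k) {x y : ℕ} {c : List (ℕ × ℕ)}
    (h : IsKChain A B k c) (hlt : ∀ p ∈ c, p.1 < x ∧ p.2 < y) :
    c.length ≤ LCSkT A B k x y := by
  by_cases h0 : x = 0 ∨ y = 0
  · have : c = [] := List.eq_nil_iff_forall_not_mem.mpr fun p hp => by
      have := hlt p hp; omega
    simp [this]
  rw [LCSkT, if_neg h0]
  exact ((isKChain_take_iff_lt (by omega) (by omega)).mpr ⟨h, hlt⟩).length_le_LCSk hk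

variable (A B) in
theorem exists_isKChain_length_eq_LCSkT (hk : 1 ≤ k) (x y : ℕ) :
    ∃ c, IsKChain A B k c ∧ (∀ p ∈ c, p.1 < x ∧ p.2 < y) ∧ c.length = LCSkT A B k x y := by
  by_cases h0 : x = 0 ∨ y = 0
  · exact ⟨[], ⟨List.isChain_nil, by simp⟩, by simp, by simp [LCSkT, h0]⟩
  obtain ⟨c, hc, hlen⟩ := exists_isKChain_length_eq_LCSk (A.take (x + k - 1)) (B.take (y + k - 1)) hk
  rw [isKChain_take_iff_lt (by omega) (by omega)] at hc
  exact ⟨c, hc.1, hc.2, by rw [hlen, LCSkT, if_neg h0]⟩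

theorem LCSkT_mono (hk : 1 ≤ k) {x y x' y' : ℕ} (hx : x ≤ x') (hy : y ≤ y') :
    LCSkT A B k x y ≤ LCSkT A B k x' y' := by
  obtain ⟨c, hc, hlt, hlen⟩ := exists_isKChain_length_eq_LCSkT A B hk x y
  exact hlen ▸ hc.length_le_LCSkT hk fun p hp => by have := hlt p hp; omega

theorem kMatch_succ_succ_eq_one_iff {a b : ℕ} :
    kMatch A B k (a + 1) (b + 1) = 1 ↔
      a + k ≤ A.length ∧ b + k ≤ B.length ∧ ∀ f < k, A[a + f]? = B[b + f]? := by
  have ha : a + 1 + k - 1 = a + k := by omega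
  have hb : b + 1 + k - 1 = b + k := by omega
  simp [kMatch, ha, hb]

theorem LCSkT_le_max (hk : 1 ≤ k) (i j : ℕ) :
    LCSkT A B k i j ≤
      max (LCSkT A B k i (j - 1))
        (max (LCSkT A B k (i - 1) j) (LCSkT A B k (i - k) (j - k) + kMatch A B k i j)) := by
  obtain ⟨c, hc, hlt, hlen⟩ := exists_isKChain_length_eq_LCSkT A B hk i j
  rw [← hlen]
  rcases List.eq_nil_or_concat c with rfl | ⟨l, p, rfl⟩
  · simp
  rw [List.concat_eq_append] at hc hlt ⊢
  obtain ⟨hl, hlp, hp⟩ := isKChain_append_singleton_iff.mp hc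
  have hplt := hlt p (by simp)
  have hle_last : ∀ q ∈ l ++ [p], q.1 ≤ p.1 ∧ q.2 ≤ p.2 := by
    simp only [List.mem_append, List.mem_singleton]
    rintro q (hq | rfl)
    · have := hlp q hq; omega
    · omega
  by_cases hi : p.1 + 1 < i
  · have := hc.length_le_LCSkT hk (x := i - 1) (y := j) fun q hq => by
      have := hle_last q hq; omega
    omega
  by_cases hj : p.2 + 1 < j
  · have := hc.length_le_LCSkT hk (x := i) (y := j - 1) fun q hq => by
      have := hle_last q hq; omega
    omega
  obtain ⟨a, b⟩ := p
  obtain ⟨rfl, rfl⟩ : i = a + 1 ∧ j = b + 1 := by simp only at hi hj hplt; omega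
  have hmatch : kMatch A B k (a + 1) (b + 1) = 1 := kMatch_succ_succ_eq_one_iff.mpr hp
  have := hl.length_le_LCSkT hk (x := a + 1 - k) (y := b + 1 - k) fun q hq => by
    have := hlp q hq; simp only at this; omega
  simp only [List.length_append, List.length_singleton]
  omega

theorem LCSkT_sub_add_kMatch_le (hk : 1 ≤ k) (i j : ℕ) :
    LCSkT A B k (i - k) (j - k) + kMatch A B k i j ≤ LCSkT A B k i j := by
  by_cases hmatch : kMatch A B k i j = 1
  · have hpos : 1 ≤ i ∧ 1 ≤ j := by
      unfold kMatch at hmatch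
      split_ifs at hmatch with h
      exact ⟨h.1, h.2.1⟩
    obtain ⟨a, rfl⟩ := Nat.exists_eq_add_one.mpr hpos.1
    obtain ⟨b, rfl⟩ := Nat.exists_eq_add_one.mpr hpos.2
    obtain ⟨l, hl, hlt, hlen⟩ := exists_isKChain_length_eq_LCSkT A B hk (a + 1 - k) (b + 1 - k)
    have hext : IsKChain A B k (l ++ [(a, b)]) :=
      isKChain_append_singleton_iff.mpr
        ⟨hl, fun q hq => by have := hlt q hq; omega, kMatch_succ_succ_eq_one_iff.mp hmatch⟩
    have := hext.length_le_LCSkT hk (x := a + 1) (y := b + 1) fun q hq => by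
      simp only [List.mem_append, List.mem_singleton] at hq
      rcases hq with hq | rfl
      · have := hlt q hq; omega
      · omega
    simp only [List.length_append, List.length_singleton] at this
    omega
  · have hzero : kMatch A B k i j = 0 := by
      simp only [kMatch] at hmatch ⊢; split_ifs at hmatch ⊢ <;> simp_all
    rw [hzero, Nat.add_zero]
    exact LCSkT_mono hk (Nat.sub_le i k) (Nat.sub_le j k)

end

theorem lcsk_recursive_rule_general {α : Type*} (A B : List α) (k i j : ℕ)
    (hk : 1 ≤ k) :
    LCSkT A B k i j =
      max (LCSkT A B k i (j - 1))
        (max (LCSkT A B k (i - 1) j)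
          (LCSkT A B k (i - k) (j - k) + kMatch A B k i j)) :=
  le_antisymm (LCSkT_le_max hk i j)
    (max_le (LCSkT_mono hk le_rfl (Nat.sub_le j 1))
      (max_le (LCSkT_mono hk (Nat.sub_le i 1) le_rfl) (LCSkT_sub_add_kMatch_le hk i j)))

/-- the LCSk recursive rule
`LCSk_{i,j} = max(LCSk_{i,j-1}, LCSk_{i-1,j}, LCSk_{i-k,j-k} + kMatch(i,j))`
(natural subtraction gives the convention `LCSk_{x,y} = 0` for `x ≤ 0` or `y ≤ 0`). -/
theorem lcsk_recursive_rule {α : Type*} (A B : List α) (n k i j : ℕ)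
    (hk : 1 ≤ k) (hA : A.length = n) (hB : B.length = n)
    (hi1 : 1 ≤ i) (hi2 : i ≤ n - k + 1) (hj1 : 1 ≤ j) (hj2 : j ≤ n - k + 1)
    (hkn : k ≤ n) :
    LCSkT A B k i j =
      max (LCSkT A B k i (j - 1))
        (max (LCSkT A B k (i - 1) j)
          (LCSkT A B k (i - k) (j - k) + kMatch A B k i j)) :=
  lcsk_recursive_rule_general A B k i j hk
end

section
/- The EDk recursive rule lower bound: for all valid i, j, EDk[i,j] ≤ min( EDk[i-1,j] + 1, EDk[i,j-1] + 1, X ), where X = EDk[i-k,j-k] if the longest common suffix of A[1..i] and B[1..j] has length ≥ k, and X = EDk[i-1,j-1] + 1 otherwise; with boundary conditions EDk[i,0] = i and EDk[0,j] = j. -/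
/-- Cost of the gaps determined by a chain of `k`-matchings between strings of
lengths `n` and `m`, starting after positions `pi` in `A` and `pj` in `B`:
each gap (where no symbol is left unedited) costs the maximum of its two
lengths (insertions/deletions/substitutions). -/
def gapCost (n m k : ℕ) : ℕ → ℕ → List (ℕ × ℕ) → ℕ
  | pi, pj, [] => max (n - pi) (m - pj)
  | pi, pj, p :: rest =>
    max (p.1 - pi) (p.2 - pj) + gapCost n m k (p.1 + k) (p.2 + k) rest

/-- `EDk` with insertions, deletions and substitutions: the unedited symbols
form a chain of non-overlapping common `k`-length substrings; every other
symbol is edited, the minimal cost of each gap being the max of its lengths. -/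
noncomputable def EDkS {α : Type*} (A B : List α) (k : ℕ) : ℕ :=
  sInf {d | ∃ c, IsKChain A B k c ∧ d = gapCost A.length B.length k 0 0 c}

/-- The EDk dynamic-programming table: `EDk` of the prefixes `A[1..i]`, `B[1..j]`. -/
noncomputable def EDkT {α : Type*} (A B : List α) (k i j : ℕ) : ℕ :=
  EDkS (A.take i) (B.take j) k

lemma gapCost_mono (k t : ℕ) : ∀ (c : List (ℕ × ℕ)) (n m n' m' pi pj : ℕ),
    n ≤ n' + t → m ≤ m' + t →
    gapCost n m k pi pj c ≤ gapCost n' m' k pi pj c + t := by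
  intro c
  induction c with
  | nil =>
    intro n m n' m' pi pj h1 h2
    simp only [gapCost]
    have h3 := Nat.le_max_left (n' - pi) (m' - pj)
    have h4 := Nat.le_max_right (n' - pi) (m' - pj)
    apply max_le <;> omega
  | cons p rest ih =>
    intro n m n' m' pi pj h1 h2
    simp only [gapCost]
    have := ih n m n' m' (p.1 + k) (p.2 + k) h1 h2
    omega

lemma gapCost_append (k i j : ℕ) (hki : k ≤ i) (hkj : k ≤ j) :
    ∀ (c : List (ℕ × ℕ)) (pi pj : ℕ),
    gapCost i j k pi pj (c ++ [(i - k, j - k)]) = gapCost (i - k) (j - k) k pi pj c := by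
  intro c
  induction c with
  | nil =>
    intro pi pj
    simp only [List.nil_append, gapCost]
    have h1 : i - (i - k + k) = 0 := by omega
    have h2 : j - (j - k + k) = 0 := by omega
    rw [h1, h2]
    simp
  | cons p rest ih =>
    intro pi pj
    simp only [List.cons_append, gapCost, List.append_eq, ih]

lemma isKChain_take_mono {α : Type*} (A B : List α) (k i' j' i j : ℕ)
    (hi : i' ≤ i) (hj : j' ≤ j) (c : List (ℕ × ℕ))
    (h : IsKChain (A.take i') (B.take j') k c) :
    IsKChain (A.take i) (B.take j) k c := by
  refine ⟨h.1, fun p hp => ?_⟩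
  obtain ⟨h1, h2, h3⟩ := h.2 p hp
  simp only [List.length_take] at h1 h2 ⊢
  refine ⟨by omega, by omega, fun f hf => ?_⟩
  have := h3 f hf
  rw [List.getElem?_take_of_lt (by omega : p.1 + f < i'),
      List.getElem?_take_of_lt (by omega : p.2 + f < j')] at this
  rw [List.getElem?_take_of_lt (by omega : p.1 + f < i),
      List.getElem?_take_of_lt (by omega : p.2 + f < j)]
  exact this

lemma edkS_le {α : Type*} (A B : List α) (k : ℕ) (c : List (ℕ × ℕ))
    (h : IsKChain A B k c) :
    EDkS A B k ≤ gapCost A.length B.length k 0 0 c :=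
  Nat.sInf_le ⟨c, h, rfl⟩

lemma edkS_exists {α : Type*} (A B : List α) (k : ℕ) :
    ∃ c, IsKChain A B k c ∧ EDkS A B k = gapCost A.length B.length k 0 0 c := by
  have hne : {d | ∃ c, IsKChain A B k c ∧
      d = gapCost A.length B.length k 0 0 c}.Nonempty :=
    ⟨_, [], ⟨List.isChain_nil, by simp⟩, rfl⟩
  exact Nat.sInf_mem hne

lemma edkS_nil_right {α : Type*} (A : List α) (k : ℕ) (hk : 1 ≤ k) :
    EDkS A ([] : List α) k = A.length := by
  obtain ⟨c, hc, he⟩ := edkS_exists A ([] : List α) k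
  cases c with
  | nil => simpa [gapCost] using he
  | cons p rest =>
    exfalso
    have := (hc.2 p (by simp)).2.1
    simp at this
    omega

lemma edkS_nil_left {α : Type*} (B : List α) (k : ℕ) (hk : 1 ≤ k) :
    EDkS ([] : List α) B k = B.length := by
  obtain ⟨c, hc, he⟩ := edkS_exists ([] : List α) B k
  cases c with
  | nil => simpa [gapCost] using he
  | cons p rest =>
    exfalso
    have := (hc.2 p (by simp)).1
    simp at this
    omega

/-- the EDk recursive rule upper bounds, together with the
boundary conditions `EDk[i,0] = i` and `EDk[0,j] = j`.  Here the longest common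
suffix of `A[1..i]` and `B[1..j]` having length `≥ k` is expressed directly. -/
theorem edkT_recursive_rule {α : Type*} (A B : List α) (n m k : ℕ)
    (hk : 1 ≤ k) (hA : A.length = n) (hB : B.length = m) :
    (∀ i ≤ n, EDkT A B k i 0 = i) ∧ (∀ j ≤ m, EDkT A B k 0 j = j) ∧
    ∀ i j : ℕ, 1 ≤ i → i ≤ n → 1 ≤ j → j ≤ m →
      (EDkT A B k i j ≤ EDkT A B k (i - 1) j + 1) ∧
      (EDkT A B k i j ≤ EDkT A B k i (j - 1) + 1) ∧
      ((k ≤ i ∧ k ≤ j ∧ ∀ f < k, A[i - k + f]? = B[j - k + f]?) →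
        EDkT A B k i j ≤ EDkT A B k (i - k) (j - k)) ∧
      (¬(k ≤ i ∧ k ≤ j ∧ ∀ f < k, A[i - k + f]? = B[j - k + f]?) →
        EDkT A B k i j ≤ EDkT A B k (i - 1) (j - 1) + 1) := by
  subst hA hB
  refine ⟨fun i hi => ?_, fun j hj => ?_, fun i j hi1 hi2 hj1 hj2 => ?_⟩
  · simp only [EDkT, List.take_zero, edkS_nil_right _ _ hk, List.length_take]
    omega
  · simp only [EDkT, List.take_zero, edkS_nil_left _ _ hk, List.length_take]
    omega
  refine ⟨?_, ?_, ?_, ?_⟩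
  · -- deletion
    obtain ⟨c, hc, he⟩ := edkS_exists (A.take (i - 1)) (B.take j) k
    have hc' := isKChain_take_mono A B k (i - 1) j i j (by omega) le_rfl c hc
    have h1 := edkS_le _ _ _ _ hc'
    have h2 := gapCost_mono k 1 c (A.take i).length (B.take j).length
      (A.take (i - 1)).length (B.take j).length 0 0
      (by simp [List.length_take]; omega) (by omega)
    simp only [EDkT]
    omega
  · -- insertion
    obtain ⟨c, hc, he⟩ := edkS_exists (A.take i) (B.take (j - 1)) k
    have hc' := isKChain_take_mono A B k i (j - 1) i j le_rfl (by omega) c hc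
    have h1 := edkS_le _ _ _ _ hc'
    have h2 := gapCost_mono k 1 c (A.take i).length (B.take j).length
      (A.take i).length (B.take (j - 1)).length 0 0
      (by omega) (by simp [List.length_take]; omega)
    simp only [EDkT]
    omega
  · -- match
    rintro ⟨hki, hkj, hmatch⟩
    obtain ⟨c, hc, he⟩ := edkS_exists (A.take (i - k)) (B.take (j - k)) k
    have hc0 := isKChain_take_mono A B k (i - k) (j - k) i j (by omega) (by omega) c hc
    have hc' : IsKChain (A.take i) (B.take j) k (c ++ [(i - k, j - k)]) := by
      constructor
      · refine hc0.1.append (by simp) ?_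
        intro x hx y hy
        simp only [List.head?_cons, Option.mem_def, Option.some.injEq] at hy
        subst hy
        obtain ⟨hxm, rfl⟩ := List.mem_getLast?_eq_getLast hx
        have := (hc.2 _ (List.getLast_mem hxm)).1
        have := (hc.2 _ (List.getLast_mem hxm)).2.1
        simp only [List.length_take] at *
        constructor <;> omega
      · intro p hp
        rcases List.mem_append.1 hp with hp | hp
        · exact hc0.2 p hp
        · simp only [List.mem_singleton] at hp
          subst hp
          simp only [List.length_take]
          refine ⟨by omega, by omega, fun f hf => ?_⟩
          rw [List.getElem?_take_of_lt (by omega : i - k + f < i),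
              List.getElem?_take_of_lt (by omega : j - k + f < j)]
          exact hmatch f hf
    have h1 := edkS_le _ _ _ _ hc'
    have hlen1 : (A.take i).length = i := by simp [List.length_take]; omega
    have hlen2 : (B.take j).length = j := by simp [List.length_take]; omega
    have hlen3 : (A.take (i - k)).length = i - k := by simp [List.length_take]; omega
    have hlen4 : (B.take (j - k)).length = j - k := by simp [List.length_take]; omega
    rw [hlen1, hlen2, gapCost_append k i j hki hkj c 0 0] at h1
    simp only [EDkT]
    rw [he, hlen3, hlen4]
    exact h1
  · -- substitution
    intro _
    obtain ⟨c, hc, he⟩ := edkS_exists (A.take (i - 1)) (B.take (j - 1)) k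
    have hc' := isKChain_take_mono A B k (i - 1) (j - 1) i j (by omega) (by omega) c hc
    have h1 := edkS_le _ _ _ _ hc'
    have h2 := gapCost_mono k 1 c (A.take i).length (B.take j).length
      (A.take (i - 1)).length (B.take (j - 1)).length 0 0
      (by simp [List.length_take]; omega) (by simp [List.length_take]; omega)
    simp only [EDkT]
    omega
end
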